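/- Comparison of Morse complexes via natural transformations: Let C and D be based complexes over an additive category with Morse matchings M and N respectively, and fix a homological degree i. Suppose F is a functor from the category of critical paths CP(C, M, i) to CP(D, N, i) that (1) sends unmatched cells bijectively to unmatched cells preserving homological degree, (2) induces for unmatched cells c_1, c_2 a bijection Mor(c_1, c_2) → Mor(F c_1, F c_2) such that each path p and F p have the same number of reversed edges modulo 2, and (3) admits a natural transformation γ : R_C ∘ I_C ⇒ R_D ∘ I_D ∘ F. Define f^i : (MC)^i → (ND)^i as the diagonal morphism with entries γ_c for critical cells c of degree i, and f^{i+1} similarly. Then f^{i+1} ∘ d^i_{MC} = ∂^i_{ND} ∘ f^i, i.e. the square formed by the Morse differentials and f^i, f^{i+1} commutes; moreover f^i and f^{i+1} are isomorphisms if all γ_c are. -/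

import Mathlib

/-!
The entry of the Morse differential at critical cells `(c, c')` is a signed sum over the paths
from `c` to `c'`. There are finitely many: the graph of the matching is acyclic, so a path is
determined by its list of vertices, which has no repetitions, and there are finitely many cells.
Composing with the diagonal matrices of `γ` multiplies that entry by components of `γ`; naturality
carries `γ` across each term `R_C(p)` to `R_D(F p)`, parity preservation keeps its sign, and
reindexing along the bijection of paths identifies the two sums.
The diagonal matrices are biproduct reindexings of the `γ`, hence isomorphisms when the `γ` are.
-/

open CategoryTheory CategoryTheory.Limits

namespace Stmt5

universe v u

variable (𝒞 : Type u) [Category.{v} 𝒞] [Preadditive 𝒞] [HasZeroObject 𝒞]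
  [HasFiniteBiproducts 𝒞]

structure BasedComplex where
  J : ℤ → Type
  fin : ∀ i, Fintype (J i)
  bdd : ∃ N : ℕ, ∀ i : ℤ, (N : ℤ) < |i| → IsEmpty (J i)
  cell : ∀ i, J i → 𝒞
  d : ∀ i, (j : J i) → (k : J (i + 1)) → (cell i j ⟶ cell (i + 1) k)
  dsq : ∀ i (j : J i) (l : J (i + 1 + 1)),
    ∑ k : J (i + 1), d i j k ≫ d (i + 1) k l = 0

attribute [instance] BasedComplex.fin

variable {𝒞}

def Vert (C : BasedComplex 𝒞) : Type := Σ i : ℤ, C.J i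

abbrev MatchingData (C : BasedComplex 𝒞) : Type := Set (Σ i : ℤ, C.J i × C.J (i + 1))

def src {C : BasedComplex 𝒞} (m : Σ i : ℤ, C.J i × C.J (i + 1)) : Vert C := ⟨m.1, m.2.1⟩

def tgt {C : BasedComplex 𝒞} (m : Σ i : ℤ, C.J i × C.J (i + 1)) : Vert C :=
  ⟨m.1 + 1, m.2.2⟩

def IsPartialMatching (C : BasedComplex 𝒞) (M : MatchingData C) : Prop :=
  ∀ m ∈ M, ∀ m' ∈ M, m ≠ m' →
    src m ≠ src m' ∧ src m ≠ tgt m' ∧ tgt m ≠ src m' ∧ tgt m ≠ tgt m'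

def AllIso (C : BasedComplex 𝒞) (M : MatchingData C) : Prop :=
  ∀ m ∈ M, IsIso (C.d m.1 m.2.1 m.2.2)

inductive GStep (C : BasedComplex 𝒞) (M : MatchingData C) : Vert C → Vert C → Type
  | up {i : ℤ} (j : C.J i) (k : C.J (i + 1)) (hd : C.d i j k ≠ 0)
      (hm : ⟨i, (j, k)⟩ ∉ M) : GStep C M ⟨i, j⟩ ⟨i + 1, k⟩
  | down {i : ℤ} (j : C.J i) (k : C.J (i + 1)) (hm : ⟨i, (j, k)⟩ ∈ M) :
      GStep C M ⟨i + 1, k⟩ ⟨i, j⟩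

def GEdge (C : BasedComplex 𝒞) (M : MatchingData C) (v w : Vert C) : Prop :=
  Nonempty (GStep C M v w)

def HasCycle {V : Type*} (E : V → V → Prop) : Prop :=
  ∃ (n : ℕ) (f : ℕ → V), 0 < n ∧ f n = f 0 ∧ ∀ t < n, E (f t) (f (t + 1))

inductive GPath (C : BasedComplex 𝒞) (M : MatchingData C) : Vert C → Vert C → Type
  | nil (v : Vert C) : GPath C M v v
  | cons {v w x : Vert C} (e : GStep C M v w) (p : GPath C M w x) : GPath C M v x

def cellOf (C : BasedComplex 𝒞) (v : Vert C) : 𝒞 := C.cell v.1 v.2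

def stepDown {C : BasedComplex 𝒞} {M : MatchingData C} {v w : Vert C} :
    GStep C M v w → ℕ
  | .up _ _ _ _ => 0
  | .down _ _ _ => 1

def downCount {C : BasedComplex 𝒞} {M : MatchingData C} :
    ∀ {v w : Vert C}, GPath C M v w → ℕ
  | _, _, .nil _ => 0
  | _, _, .cons e p => stepDown e + downCount p

noncomputable def stepHom {C : BasedComplex 𝒞} {M : MatchingData C}
    (hiso : AllIso C M) {v w : Vert C} : GStep C M v w → (cellOf C v ⟶ cellOf C w)
  | .up j k _ _ => C.d _ j k
  | .down (i := i) j k hm => by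
      letI : IsIso (C.d i j k) := hiso ⟨i, (j, k)⟩ hm
      exact @inv _ _ _ _ (C.d i j k) this

noncomputable def pathHom {C : BasedComplex 𝒞} {M : MatchingData C}
    (hiso : AllIso C M) : ∀ {v w : Vert C}, GPath C M v w → (cellOf C v ⟶ cellOf C w)
  | _, _, .nil _ => 𝟙 _
  | _, _, .cons e p => stepHom hiso e ≫ pathHom hiso p

def IsCritical (C : BasedComplex 𝒞) (M : MatchingData C) (v : Vert C) : Prop :=
  ∀ m ∈ M, src m ≠ v ∧ tgt m ≠ v

def Crit (C : BasedComplex 𝒞) (M : MatchingData C) (i : ℤ) : Type :=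
  {j : C.J i // IsCritical C M ⟨i, j⟩}

noncomputable instance (C : BasedComplex 𝒞) (M : MatchingData C) (i : ℤ) :
    Fintype (Crit C M i) := by classical exact Subtype.fintype _

/-- The Morse differential in degree `i`: the matrix of signed sums over directed paths
between critical cells. -/
noncomputable def morseD (C : BasedComplex 𝒞) (M : MatchingData C) (hiso : AllIso C M)
    (i : ℤ) :
    (⨁ fun c : Crit C M i => C.cell i c.1) ⟶
      (⨁ fun c' : Crit C M (i + 1) => C.cell (i + 1) c'.1) :=
  biproduct.matrix fun c c' =>
    ∑ᶠ p : GPath C M ⟨i, c.1⟩ ⟨i + 1, c'.1⟩, ((-1 : ℤ) ^ downCount p) • pathHom hiso p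

end Stmt5

open Relation

namespace CategoryTheory

variable {𝒞 : Type*} [Category 𝒞] [Preadditive 𝒞]

theorem Preadditive.finsum_comp_eq_comp_finsum {P Q : Type*} [Finite P] (Φ : P ≃ Q)
    {X Y X' Y' : 𝒞} {f : P → (X ⟶ Y)} {g : Q → (X' ⟶ Y')} {a : X ⟶ X'} {b : Y ⟶ Y'}
    (h : ∀ p, f p ≫ b = a ≫ g (Φ p)) : (∑ᶠ p, f p) ≫ b = a ≫ ∑ᶠ q, g q := by
  have : Finite Q := .of_equiv P Φ
  calc (∑ᶠ p, f p) ≫ b = ∑ᶠ p, f p ≫ b :=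
        (Preadditive.rightComp X b).map_finsum (Set.toFinite _)
    _ = ∑ᶠ p, a ≫ g (Φ p) := finsum_congr h
    _ = ∑ᶠ q, a ≫ g q := finsum_comp_equiv Φ (f := fun q => a ≫ g q)
    _ = a ≫ ∑ᶠ q, g q := ((Preadditive.leftComp Y' a).map_finsum (Set.toFinite _)).symm

namespace Limits.biproduct

variable [HasFiniteBiproducts 𝒞] {α β α' β' : Type} [Fintype α] [Fintype β] [Fintype α']
  [Fintype β'] [DecidableEq β] [DecidableEq β']

noncomputable def mapOfEquiv {f : α → 𝒞} {g : β → 𝒞} (e : α ≃ β) (γ : ∀ a, f a ⟶ g (e a)) :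
    ⨁ f ⟶ ⨁ g :=
  biproduct.matrix fun a b => if h : e a = b then γ a ≫ eqToHom (by rw [h]) else 0

variable {f : α → 𝒞} {g : β → 𝒞} {e : α ≃ β} {γ : ∀ a, f a ⟶ g (e a)}

@[simp]
theorem mapOfEquiv_π (a : α) :
    biproduct.mapOfEquiv e γ ≫ biproduct.π g (e a) = biproduct.π f a ≫ γ a := by
  refine biproduct.hom_ext' _ _ fun a' => ?_
  by_cases h : a' = a
  · subst h
    simp [biproduct.mapOfEquiv]
  · simp [biproduct.mapOfEquiv, biproduct.ι_π_ne_assoc _ h, e.injective.ne h]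

@[simp]
theorem ι_mapOfEquiv_assoc (a : α) {Z : 𝒞} (h : ⨁ g ⟶ Z) :
    biproduct.ι f a ≫ biproduct.mapOfEquiv e γ ≫ h = γ a ≫ biproduct.ι g (e a) ≫ h := by
  suffices biproduct.ι f a ≫ biproduct.mapOfEquiv e γ = γ a ≫ biproduct.ι g (e a) by
    rw [← Category.assoc, this, Category.assoc]
  refine biproduct.hom_ext _ _ fun b => ?_
  obtain ⟨a', rfl⟩ := e.surjective b
  by_cases h : a = a'
  · subst h
    simp
  · simp [biproduct.ι_π_ne_assoc _ h, biproduct.ι_π_ne _ (e.injective.ne h)]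

theorem isIso_mapOfEquiv (hγ : ∀ a, IsIso (γ a)) : IsIso (biproduct.mapOfEquiv e γ) := by
  have : biproduct.mapOfEquiv e γ =
      (biproduct.whiskerEquiv e fun a => (asIso (γ a)).symm).hom := by
    ext a b
    simp
  rw [this]
  infer_instance

theorem matrix_comp_mapOfEquiv {f' : α' → 𝒞} {g' : β' → 𝒞} {e' : α' ≃ β'}
    {γ' : ∀ a', f' a' ⟶ g' (e' a')} {m : ∀ a a', f a ⟶ f' a'} {n : ∀ b b', g b ⟶ g' b'}
    (h : ∀ a a', m a a' ≫ γ' a' = γ a ≫ n (e a) (e' a')) :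
    biproduct.matrix m ≫ biproduct.mapOfEquiv e' γ' =
      biproduct.mapOfEquiv e γ ≫ biproduct.matrix n := by
  refine biproduct.hom_ext' _ _ fun a => biproduct.hom_ext _ _ fun b => ?_
  obtain ⟨a', rfl⟩ := e'.surjective b
  simp [h]

end Limits.biproduct

end CategoryTheory

theorem Relation.TransGen.exists_seq {V : Type*} {E : V → V → Prop} {a b : V}
    (h : TransGen E a b) :
    ∃ (n : ℕ) (f : ℕ → V), 0 < n ∧ f 0 = a ∧ f n = b ∧ ∀ t < n, E (f t) (f (t + 1)) := by
  induction h with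
  | @single b hab =>
    exact ⟨1, fun t => if t = 0 then a else b, one_pos, rfl, rfl, by simp [hab]⟩
  | @tail b c _ hbc ih =>
    obtain ⟨n, f, hn, hf0, hfn, hf⟩ := ih
    refine ⟨n + 1, fun t => if t ≤ n then f t else c, n.succ_pos, by simp [hf0], by simp, ?_⟩
    intro t ht
    rcases (Nat.lt_succ_iff.mp ht).lt_or_eq with ht | rfl
    · simpa [ht.le, Nat.succ_le_of_lt ht] using hf t ht
    · simpa [hfn] using hbc

namespace Stmt5

theorem hasCycle_of_transGen {V : Type*} {E : V → V → Prop} {v : V} (h : TransGen E v v) :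
    HasCycle E :=
  let ⟨n, f, hn, hf0, hfn, hf⟩ := h.exists_seq
  ⟨n, f, hn, hfn.trans hf0.symm, hf⟩

section

variable {𝒞 : Type*} [Category 𝒞] [Preadditive 𝒞] {C : BasedComplex 𝒞} {M : MatchingData C}

instance : Finite (Vert C) := by
  obtain ⟨N, hN⟩ := C.bdd
  refine Set.finite_univ_iff.mp <| ((Set.finite_Icc (-N : ℤ) N).biUnion
    fun i _ => Set.finite_range (Sigma.mk i : C.J i → Vert C)).subset ?_
  rintro ⟨i, j⟩ -
  simp only [Set.mem_iUnion, Set.mem_range, Set.mem_Icc, ← abs_le]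
  exact ⟨i, not_lt.mp fun h => (hN i h).false j, j, rfl⟩

theorem GStep.heq {v w v' w' : Vert C} (e : GStep C M v w) (e' : GStep C M v' w')
    (hv : v = v') (hw : w = w') : HEq e e' := by
  cases e <;> cases e' <;> simp only [Vert, Sigma.mk.injEq] at hv hw
  · obtain ⟨rfl, hj⟩ := hv
    cases hj; cases eq_of_heq hw.2; rfl
  · omega
  · omega
  · obtain ⟨rfl, hj⟩ := hw
    cases hj; cases eq_of_heq hv.2; rfl

instance {v w : Vert C} : Subsingleton (GStep C M v w) :=
  ⟨fun e e' => eq_of_heq (e.heq e' rfl rfl)⟩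

namespace GPath

def support : ∀ {v w : Vert C}, GPath C M v w → List (Vert C)
  | v, _, nil _ => [v]
  | v, _, cons _ p => v :: p.support

theorem support_eq_cons {v w : Vert C} (p : GPath C M v w) : ∃ l, p.support = v :: l := by
  cases p <;> exact ⟨_, rfl⟩

theorem reflTransGen_of_mem_support {u v w : Vert C} (p : GPath C M v w) (hu : u ∈ p.support) :
    ReflTransGen (GEdge C M) v u := by
  induction p with
  | nil => rw [List.mem_singleton.mp hu]
  | cons e p ih =>
    rcases List.mem_cons.mp hu with rfl | hu
    · rfl
    · exact .head ⟨e⟩ (ih hu)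

theorem support_nodup (hacyc : ¬ HasCycle (GEdge C M)) {v w : Vert C} (p : GPath C M v w) :
    p.support.Nodup := by
  induction p with
  | nil => exact List.nodup_singleton _
  | cons e p ih =>
    refine List.nodup_cons.mpr ⟨fun hv => hacyc ?_, ih⟩
    exact hasCycle_of_transGen (.head' ⟨e⟩ (p.reflTransGen_of_mem_support hv))

theorem support_injective {v w : Vert C} :
    Function.Injective (support : GPath C M v w → List (Vert C)) := by
  intro p q h
  induction p with
  | nil =>
    cases q with
    | nil => rfl
    | cons e q =>
      obtain ⟨l, hl⟩ := q.support_eq_cons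
      simp [support, hl] at h
  | cons e p ih =>
    cases q with
    | nil =>
      obtain ⟨l, hl⟩ := p.support_eq_cons
      simp [support, hl] at h
    | cons e' q =>
      obtain ⟨l, hl⟩ := p.support_eq_cons
      obtain ⟨l', hl'⟩ := q.support_eq_cons
      simp only [support, hl, hl', List.cons.injEq] at h
      obtain ⟨-, rfl, rfl⟩ := h
      rw [Subsingleton.elim e e', ih (hl.trans hl'.symm)]

theorem finite (hacyc : ¬ HasCycle (GEdge C M)) (v w : Vert C) : Finite (GPath C M v w) := by
  classical
  have := Fintype.ofFinite (Vert C)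
  exact .of_injective
    (fun p => (⟨p.support, p.support_nodup hacyc⟩ : {l : List (Vert C) // l.Nodup}))
    fun _ _ h => support_injective (congrArg Subtype.val h)

end GPath

end

universe v u

variable {𝒞 : Type u} [Category.{v} 𝒞] [Preadditive 𝒞] [HasZeroObject 𝒞]
  [HasFiniteBiproducts 𝒞]

open Classical in
theorem stmt5 (C D : BasedComplex 𝒞) (M : MatchingData C) (N : MatchingData D)
    -- `M` and `N` are Morse matchings:
    (hisoC : AllIso C M) (hacycC : ¬ HasCycle (GEdge C M))
    (hisoD : AllIso D N)
    (i₀ : ℤ)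
    -- the functor `F` between the categories of critical paths, given by bijections on
    -- critical cells of degrees `i₀`, `i₀ + 1` ...
    (e₀ : Crit C M i₀ ≃ Crit D N i₀) (e₁ : Crit C M (i₀ + 1) ≃ Crit D N (i₀ + 1))
    -- ... and bijections on the path sets between corresponding critical cells
    (Φ : ∀ (c : Crit C M i₀) (c' : Crit C M (i₀ + 1)),
      GPath C M ⟨i₀, c.1⟩ ⟨i₀ + 1, c'.1⟩ ≃ GPath D N ⟨i₀, (e₀ c).1⟩ ⟨i₀ + 1, (e₁ c').1⟩)
    -- preserving the number of reversed edges modulo 2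
    (hpar : ∀ c c' p, downCount ((Φ c c') p) % 2 = downCount p % 2)
    -- the components of the natural transformation `γ : R_C ∘ I_C ⇒ R_D ∘ I_D ∘ F` at
    -- the critical cells ...
    (γ₀ : ∀ c : Crit C M i₀, (C.cell i₀ c.1 ⟶ D.cell i₀ (e₀ c).1))
    (γ₁ : ∀ c' : Crit C M (i₀ + 1), (C.cell (i₀ + 1) c'.1 ⟶ D.cell (i₀ + 1) (e₁ c').1))
    -- ... with (path-level) naturality
    (hnat : ∀ (c : Crit C M i₀) (c' : Crit C M (i₀ + 1))
        (p : GPath C M ⟨i₀, c.1⟩ ⟨i₀ + 1, c'.1⟩),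
      pathHom hisoC p ≫ γ₁ c' = γ₀ c ≫ pathHom hisoD ((Φ c c') p)) :
    -- Conclusion: the diagonal morphisms with entries `γ` intertwine the Morse
    -- differentials, and are isomorphisms if all the `γ` are.
    (morseD C M hisoC i₀ ≫
        (biproduct.matrix fun (c' : Crit C M (i₀ + 1)) (b : Crit D N (i₀ + 1)) =>
          if h : e₁ c' = b then γ₁ c' ≫ eqToHom (by rw [h]) else 0)
      = (biproduct.matrix fun (c : Crit C M i₀) (b : Crit D N i₀) =>
          if h : e₀ c = b then γ₀ c ≫ eqToHom (by rw [h]) else 0) ≫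
        morseD D N hisoD i₀) ∧
    ((∀ c, IsIso (γ₀ c)) →
      IsIso (biproduct.matrix fun (c : Crit C M i₀) (b : Crit D N i₀) =>
        if h : e₀ c = b then γ₀ c ≫ eqToHom (by rw [h]) else 0)) ∧
    ((∀ c', IsIso (γ₁ c')) →
      IsIso (biproduct.matrix fun (c' : Crit C M (i₀ + 1)) (b : Crit D N (i₀ + 1)) =>
        if h : e₁ c' = b then γ₁ c' ≫ eqToHom (by rw [h]) else 0)) := by
  classical
  refine ⟨biproduct.matrix_comp_mapOfEquiv fun c c' => ?_,
    fun hγ₀ => biproduct.isIso_mapOfEquiv hγ₀, fun hγ₁ => biproduct.isIso_mapOfEquiv hγ₁⟩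
  have := GPath.finite hacycC ⟨i₀, c.1⟩ ⟨i₀ + 1, c'.1⟩
  refine Preadditive.finsum_comp_eq_comp_finsum (Φ c c') fun p => ?_
  have hsign : (-1 : ℤ) ^ downCount (Φ c c' p) = (-1) ^ downCount p := by
    rw [neg_one_pow_eq_pow_mod_two, hpar, ← neg_one_pow_eq_pow_mod_two]
  rw [hsign]
  exact (Preadditive.zsmul_comp _ _ _).trans <|
    (congrArg _ (hnat c c' p)).trans (Preadditive.comp_zsmul _ _ _).symm

end Stmt5
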